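/- arXiv:2403.12183 — 2 statements merged into one kernel-verified Lean document; each statement's English description precedes it below -/
import Mathlib

section
/- Let μ be a stable matching of a matching market in which all pairs are mutually acceptable, and let f be a firm with μ(f) = w ∈ W. If the operation breakmarriage(μ, f) terminates successfully, then the resulting matching μ' is stable. -/
/-- A matching market of size `n`.  `fpref f` is the rank permutation of firm `f`:
`fpref f w` is the rank firm `f` assigns to worker `w` (rank `0` = most
preferred), and similarly `wpref` for workers.  All pairs are mutually
acceptable: being unmatched is implicitly worse than being matched to anybody. -/
structure Market (n : ℕ) where
  fpref : Fin n → Fin n ≃ Fin n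
  wpref : Fin n → Fin n ≃ Fin n

/-- A (possibly partial) one-to-one matching between firms and workers. -/
structure Matching (n : ℕ) where
  mf : Fin n → Option (Fin n)
  mw : Fin n → Option (Fin n)
  consistent : ∀ f w, mf f = some w ↔ mw w = some f

variable {n : ℕ}

/-- Firm `f` strictly prefers worker `w` to the (optional) partner `o`. -/
def FPrefOver (M : Market n) (f w : Fin n) (o : Option (Fin n)) : Prop :=
  ∀ w' ∈ o, M.fpref f w < M.fpref f w'

/-- Worker `w` strictly prefers firm `f` to the (optional) partner `o`. -/
def WPrefOver (M : Market n) (w f : Fin n) (o : Option (Fin n)) : Prop :=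
  ∀ f' ∈ o, M.wpref w f < M.wpref w f'

/-- `(f, w)` is a blocking pair of `μ`. -/
def Blocking (M : Market n) (μ : Matching n) (f w : Fin n) : Prop :=
  μ.mf f ≠ some w ∧ FPrefOver M f w (μ.mf f) ∧ WPrefOver M w f (μ.mw w)

/-- A matching is stable if it admits no blocking pair. -/
def Stable (M : Market n) (μ : Matching n) : Prop :=
  ∀ f w, ¬ Blocking M μ f w

/-- A state of the restarted deferred-acceptance process underlying
`breakmarriage`: `asg` is the current tentative assignment (firm to tentatively
held worker), and `free` records the free firm together with the rank of the next
worker on her list to whom she will propose. -/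
structure BMState (n : ℕ) where
  asg : Fin n → Option (Fin n)
  free : Option (Fin n × ℕ)

/-- The initial state of `breakmarriage (μ, f)` with `wbar = μ(f)`: the pair
`(f, wbar)` is broken, everyone else keeps their partner under `μ`, and `f` is
about to propose to the worker immediately following `wbar` on her list. -/
def bmInit (M : Market n) (μ : Matching n) (f wbar : Fin n) : BMState n :=
  ⟨fun g => if g = f then none else μ.mf g, some (f, (M.fpref f wbar : ℕ) + 1)⟩

/-- One step of the restarted deferred-acceptance process of
`breakmarriage (μ, f)` where `wbar = μ(f)` is semi-free (he accepts only firms he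
strictly prefers to `f`).  The free firm `f'` proposes to the worker `wt` of rank
`r` on her list; either `wt` rejects (because he holds, or in the case of `wbar`
semi-holds, a firm he weakly prefers) and `f'` moves on to the next rank, or `wt`
accepts and displaces his currently held firm, who becomes free. -/
def BMStep (M : Market n) (f wbar : Fin n) (s s' : BMState n) : Prop :=
  ∃ f' r, ∃ hr : r < n,
    s.free = some (f', r) ∧
    ((∃ g, s.asg g = some ((M.fpref f').symm ⟨r, hr⟩) ∧
        ¬ (M.wpref ((M.fpref f').symm ⟨r, hr⟩) f' <
            M.wpref ((M.fpref f').symm ⟨r, hr⟩) g) ∧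
        s' = ⟨s.asg, some (f', r + 1)⟩) ∨
     ((M.fpref f').symm ⟨r, hr⟩ = wbar ∧ (∀ g, s.asg g ≠ some wbar) ∧
        ¬ (M.wpref wbar f' < M.wpref wbar f) ∧
        s' = ⟨s.asg, some (f', r + 1)⟩) ∨
     (∃ g, s.asg g = some ((M.fpref f').symm ⟨r, hr⟩) ∧
        (M.wpref ((M.fpref f').symm ⟨r, hr⟩) f' <
            M.wpref ((M.fpref f').symm ⟨r, hr⟩) g) ∧
        s' = ⟨fun x => if x = f' then some ((M.fpref f').symm ⟨r, hr⟩)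
                else if x = g then none else s.asg x,
              some (g, (M.fpref g ((M.fpref f').symm ⟨r, hr⟩) : ℕ) + 1)⟩))

/-- The state `s` terminates successfully with resulting matching `μ'`: the free
firm `f'` is about to propose to the semi-free worker `wbar`, whom nobody holds
and who strictly prefers `f'` to `f`; the resulting assignment matches `f'` with
`wbar` and keeps the rest of the tentative assignment. -/
def BMSuccess (M : Market n) (f wbar : Fin n) (s : BMState n) (μ' : Matching n) : Prop :=
  ∃ f' r, ∃ hr : r < n,
    s.free = some (f', r) ∧ (M.fpref f').symm ⟨r, hr⟩ = wbar ∧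
    (∀ g, s.asg g ≠ some wbar) ∧ M.wpref wbar f' < M.wpref wbar f ∧
    μ'.mf = Function.update s.asg f' (some wbar)

/-- The operation `breakmarriage (μ, f)` terminates successfully with resulting
matching `μ'`. -/
def Breakmarriage (M : Market n) (μ : Matching n) (f : Fin n) (μ' : Matching n) : Prop :=
  ∃ wbar, μ.mf f = some wbar ∧
    ∃ s, Relation.ReflTransGen (BMStep M f wbar) (bmInit M μ f wbar) s ∧
      BMSuccess M f wbar s μ'
/-- Worker `w` "defends" against firm `g` under assignment `A`: either `w = wbar`
and `wbar` weakly prefers `f` to `g`, or some firm `h` holding `w` is weakly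
preferred by `w` to `g`. -/
def BMGood (M : Market n) (f wbar : Fin n) (A : Fin n → Option (Fin n))
    (g w : Fin n) : Prop :=
  (w = wbar ∧ M.wpref wbar f ≤ M.wpref wbar g) ∨
    (∃ h, A h = some w ∧ M.wpref w h ≤ M.wpref w g)

/-- The invariant maintained along the restarted deferred-acceptance run. -/
def BMInv (M : Market n) (f wbar : Fin n) (s : BMState n) : Prop :=
  ∃ f' r, s.free = some (f', r) ∧
    (∀ g, s.asg g = none ↔ g = f') ∧
    (∀ g, s.asg g ≠ some wbar) ∧
    (∀ g h w, s.asg g = some w → s.asg h = some w → g = h) ∧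
    (∀ w, (M.fpref f' w : ℕ) < r → BMGood M f wbar s.asg f' w) ∧
    (∀ g w w', s.asg g = some w' → M.fpref g w < M.fpref g w' →
      BMGood M f wbar s.asg g w)

lemma bm_perfect (M : Market n) (μ : Matching n) (hμ : Stable M μ) (g : Fin n) :
    ∃ w, μ.mf g = some w := by
  by_contra hg
  push_neg at hg
  have hmf : μ.mf g = none := by
    cases h : μ.mf g with
    | none => rfl
    | some w => exact absurd h (hg w)
  have hw : ∃ w, μ.mw w = none := by
    by_contra hw
    push_neg at hw
    have hsome : ∀ w, ∃ h, μ.mw w = some h := by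
      intro w
      cases h : μ.mw w with
      | none => exact absurd h (hw w)
      | some h' => exact ⟨h', rfl⟩
    choose φ hφ using hsome
    have hinj : Function.Injective φ := by
      intro a b hab
      have ha := (μ.consistent (φ a) a).mpr (hφ a)
      have hb := (μ.consistent (φ b) b).mpr (hφ b)
      rw [hab, hb] at ha
      exact (Option.some_injective _ ha).symm
    obtain ⟨w, hwg⟩ := Finite.injective_iff_surjective.mp hinj g
    have := (μ.consistent (φ w) w).mpr (hφ w)
    rw [hwg, hmf] at this
    exact nomatch this
  obtain ⟨w, hww⟩ := hw
  refine hμ g w ⟨by simp [hmf], ?_, ?_⟩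
  · intro w' hw'; rw [hmf] at hw'; simp at hw'
  · intro f' hf'; rw [hww] at hf'; simp at hf'

lemma bm_inv_init (M : Market n) (μ : Matching n) (hμ : Stable M μ)
    (f wbar : Fin n) (hf : μ.mf f = some wbar) :
    BMInv M f wbar (bmInit M μ f wbar) := by
  have hwbarf : μ.mw wbar = some f := (μ.consistent f wbar).mp hf
  refine ⟨f, (M.fpref f wbar : ℕ) + 1, rfl, ?_, ?_, ?_, ?_, ?_⟩
  · intro g
    by_cases hg : g = f
    · simp [bmInit, hg]
    · obtain ⟨w, hw⟩ := bm_perfect M μ hμ g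
      simp [bmInit, hg, hw]
  · intro g
    by_cases hg : g = f
    · simp [bmInit, hg]
    · simp only [bmInit, if_neg hg]
      intro hcon
      have := (μ.consistent g wbar).mp hcon
      rw [hwbarf] at this
      exact hg (Option.some_injective _ this).symm
  · intro g h w hg hh
    simp only [bmInit] at hg hh
    by_cases hgf : g = f
    · rw [if_pos hgf] at hg; exact nomatch hg
    by_cases hhf : h = f
    · rw [if_pos hhf] at hh; exact nomatch hh
    rw [if_neg hgf] at hg; rw [if_neg hhf] at hh
    have hg' := (μ.consistent g w).mp hg
    have hh' := (μ.consistent h w).mp hh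
    rw [hg'] at hh'
    exact Option.some_injective _ hh'
  · intro w hwlt
    by_cases hwb : w = wbar
    · exact Or.inl ⟨hwb, le_refl _⟩
    · have hne : M.fpref f w ≠ M.fpref f wbar := fun hc => hwb ((M.fpref f).injective hc)
      have hlt : M.fpref f w < M.fpref f wbar := by
        have h1 : (M.fpref f w : ℕ) ≤ (M.fpref f wbar : ℕ) := Nat.lt_succ_iff.mp hwlt
        exact lt_of_le_of_ne (by exact_mod_cast h1) hne
      have hnb := hμ f w
      rw [Blocking] at hnb
      push_neg at hnb
      have h1 : μ.mf f ≠ some w := by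
        rw [hf]; intro hc; exact hwb (Option.some_injective _ hc).symm
      have h2 : FPrefOver M f w (μ.mf f) := by
        intro w' hw'; rw [hf] at hw'
        have hww' : wbar = w' := by simpa using hw'
        rw [← hww']; exact hlt
      have h3 := hnb h1 h2
      rw [WPrefOver] at h3
      push_neg at h3
      obtain ⟨h, hh, hle⟩ := h3
      have hhw : μ.mw w = some h := hh
      have hhmf : μ.mf h = some w := (μ.consistent h w).mpr hhw
      have hhf : h ≠ f := by
        intro hc; rw [hc, hf] at hhmf
        exact hwb (Option.some_injective _ hhmf).symm
      exact Or.inr ⟨h, by simp [bmInit, hhf, hhmf], hle⟩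
  · intro g w w' hg hlt
    simp only [bmInit] at hg
    by_cases hgf : g = f
    · rw [if_pos hgf] at hg; exact nomatch hg
    rw [if_neg hgf] at hg
    have hne : μ.mf g ≠ some w := by
      rw [hg]; intro hc
      have hww : w' = w := Option.some_injective _ hc
      rw [hww] at hlt; exact lt_irrefl _ hlt
    have h2 : FPrefOver M g w (μ.mf g) := by
      intro w'' hw''; rw [hg] at hw''
      have hww : w' = w'' := by simpa using hw''
      rw [← hww]; exact hlt
    have hnb := hμ g w
    rw [Blocking] at hnb
    push_neg at hnb
    have h3 := hnb hne h2
    rw [WPrefOver] at h3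
    push_neg at h3
    obtain ⟨h, hh, hle⟩ := h3
    have hhw : μ.mw w = some h := hh
    have hhmf : μ.mf h = some w := (μ.consistent h w).mpr hhw
    by_cases hwb : w = wbar
    · subst hwb
      rw [hwbarf] at hhw
      have hhf : h = f := Option.some_injective _ hhw.symm
      subst hhf
      exact Or.inl ⟨rfl, hle⟩
    · have hhf : h ≠ f := by
        intro hc; rw [hc, hf] at hhmf
        exact hwb (Option.some_injective _ hhmf).symm
      exact Or.inr ⟨h, by simp [bmInit, hhf, hhmf], hle⟩

lemma bm_inv_step (M : Market n) (f wbar : Fin n) {s s' : BMState n}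
    (hs : BMInv M f wbar s) (hstep : BMStep M f wbar s s') :
    BMInv M f wbar s' := by
  obtain ⟨f1, r1, hr, hfree, hcases⟩ := hstep
  obtain ⟨f0, r0, hfree0, ha, hb, he, hc, hd⟩ := hs
  rw [hfree0] at hfree
  obtain ⟨e1, e2⟩ : f0 = f1 ∧ r0 = r1 := by
    have := Option.some_injective _ hfree
    exact ⟨congrArg Prod.fst this, congrArg Prod.snd this⟩
  subst e1; subst e2
  set wt := (M.fpref f0).symm ⟨r0, hr⟩ with hwt
  have hwtr : (M.fpref f0 wt : ℕ) = r0 := by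
    rw [hwt, Equiv.apply_symm_apply]
  rcases hcases with ⟨g0, hg0, hrej, hs'⟩ | ⟨hwtb, hnone, hrej, hs'⟩ | ⟨g0, hg0, hacc, hs'⟩
  · -- rejection by held worker
    subst hs'
    refine ⟨f0, r0 + 1, rfl, ha, hb, he, ?_, hd⟩
    intro w hw
    rcases Nat.lt_succ_iff_lt_or_eq.mp hw with hw' | hw'
    · exact hc w hw'
    · have hwwt : w = wt := by
        have h1 : M.fpref f0 w = ⟨r0, hr⟩ := Fin.ext hw'
        rw [hwt, ← h1, Equiv.symm_apply_apply]
      subst hwwt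
      exact Or.inr ⟨g0, hg0, not_lt.mp hrej⟩
  · -- rejection by semi-free worker wbar
    subst hs'
    refine ⟨f0, r0 + 1, rfl, ha, hb, he, ?_, hd⟩
    intro w hw
    rcases Nat.lt_succ_iff_lt_or_eq.mp hw with hw' | hw'
    · exact hc w hw'
    · have hwwt : w = wt := by
        have h1 : M.fpref f0 w = ⟨r0, hr⟩ := Fin.ext hw'
        rw [hwt, ← h1, Equiv.symm_apply_apply]
      subst hwwt
      exact Or.inl ⟨hwtb, not_lt.mp hrej⟩
  · -- acceptance: g0 is displaced
    subst hs'
    have hf0none : s.asg f0 = none := (ha f0).mpr rfl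
    have hf0g0 : f0 ≠ g0 := by
      intro hc'; rw [hc', hg0] at hf0none; exact nomatch hf0none
    have hwtb : wt ≠ wbar := by
      intro hc'; rw [hc'] at hg0; exact hb g0 hg0
    set A' : Fin n → Option (Fin n) := fun x =>
      if x = f0 then some wt else if x = g0 then none else s.asg x with hA'
    have hAf0 : A' f0 = some wt := by simp [hA']
    have hAother : ∀ x, x ≠ f0 → x ≠ g0 → A' x = s.asg x := by
      intro x h1 h2; simp [hA', h1, h2]
    have hAg0 : A' g0 = none := by simp [hA', Ne.symm hf0g0]
    have hmono : ∀ g w, BMGood M f wbar s.asg g w → BMGood M f wbar A' g w := by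
      intro g w hG
      rcases hG with h1 | ⟨h, hh, hle⟩
      · exact Or.inl h1
      by_cases hhg : h = g0
      · subst hhg
        rw [hg0] at hh
        have hwwt : wt = w := Option.some_injective _ hh
        subst hwwt
        exact Or.inr ⟨f0, hAf0, le_trans hacc.le hle⟩
      · have hhf : h ≠ f0 := by
          intro hc'; rw [hc', hf0none] at hh; exact nomatch hh
        exact Or.inr ⟨h, by rw [hAother h hhf hhg]; exact hh, hle⟩
    refine ⟨g0, (M.fpref g0 wt : ℕ) + 1, rfl, ?_, ?_, ?_, ?_, ?_⟩ <;> dsimp only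
    · intro g
      by_cases hgf : g = f0
      · subst hgf
        rw [hAf0]
        simp [hf0g0]
      by_cases hgg : g = g0
      · subst hgg; simp [hAg0]
      · rw [hAother g hgf hgg]
        have h1 : s.asg g ≠ none := fun hc' => hgf ((ha g).mp hc')
        simp [h1, hgg]
    · intro g
      by_cases hgf : g = f0
      · subst hgf; rw [hAf0]
        intro hc'
        exact hwtb (Option.some_injective _ hc')
      by_cases hgg : g = g0
      · subst hgg; rw [hAg0]; exact fun hc' => nomatch hc'
      · rw [hAother g hgf hgg]; exact hb g
    · intro g h w hg hh
      by_cases hgf : g = f0 <;> by_cases hhf : h = f0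
      · rw [hgf, hhf]
      · subst hgf
        rw [hAf0] at hg
        have hwwt : wt = w := Option.some_injective _ hg
        by_cases hhg : h = g0
        · subst hhg; rw [hAg0] at hh; exact nomatch hh
        · rw [hAother h hhf hhg] at hh
          rw [← hwwt] at hh
          exact absurd (he h g0 wt hh hg0) hhg
      · subst hhf
        rw [hAf0] at hh
        have hwwt : wt = w := Option.some_injective _ hh
        by_cases hgg : g = g0
        · subst hgg; rw [hAg0] at hg; exact nomatch hg
        · rw [hAother g hgf hgg] at hg
          rw [← hwwt] at hg
          exact absurd (he g g0 wt hg hg0) hgg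
      · by_cases hgg : g = g0
        · subst hgg; rw [hAg0] at hg; exact nomatch hg
        by_cases hhg : h = g0
        · subst hhg; rw [hAg0] at hh; exact nomatch hh
        rw [hAother g hgf hgg] at hg; rw [hAother h hhf hhg] at hh
        exact he g h w hg hh
    · intro w hw
      rcases Nat.lt_succ_iff_lt_or_eq.mp hw with hw' | hw'
      · have hlt : M.fpref g0 w < M.fpref g0 wt := by
          rw [Fin.lt_def]; exact hw'
        exact hmono g0 w (hd g0 w wt hg0 hlt)
      · have hwwt : w = wt := (M.fpref g0).injective (Fin.ext hw')
        subst hwwt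
        exact Or.inr ⟨f0, hAf0, hacc.le⟩
    · intro g w w' hg hlt
      by_cases hgf : g = f0
      · subst hgf
        rw [hAf0] at hg
        have hwwt : wt = w' := Option.some_injective _ hg
        rw [← hwwt] at hlt
        have hcw : (M.fpref g w : ℕ) < r0 := by
          rw [← hwtr]; exact hlt
        exact hmono g w (hc w hcw)
      by_cases hgg : g = g0
      · subst hgg; rw [hAg0] at hg; exact nomatch hg
      · rw [hAother g hgf hgg] at hg
        exact hmono g w (hd g w w' hg hlt)

lemma bm_inv_of_rt (M : Market n) (μ : Matching n) (hμ : Stable M μ)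
    (f wbar : Fin n) (hf : μ.mf f = some wbar) {s : BMState n}
    (hrt : Relation.ReflTransGen (BMStep M f wbar) (bmInit M μ f wbar) s) :
    BMInv M f wbar s := by
  induction hrt with
  | refl => exact bm_inv_init M μ hμ f wbar hf
  | tail _ hstep ih => exact bm_inv_step M f wbar ih hstep

/-- **Lemma (McVitie–Wilson)**: if `μ` is stable and `breakmarriage (μ, f)`
terminates successfully, then the resulting matching `μ'` is stable. -/
theorem stmt10 (M : Market n) (μ : Matching n) (hμ : Stable M μ) (f : Fin n)
    (μ' : Matching n) (h : Breakmarriage M μ f μ') : Stable M μ' := by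
  obtain ⟨wbar, hfw, s, hrt, hsucc⟩ := h
  have hinv := bm_inv_of_rt M μ hμ f wbar hfw hrt
  obtain ⟨f1, r1, hr, hfree, hwt, hnone, hpref, hmf'⟩ := hsucc
  obtain ⟨f0, r0, hfree0, ha, hb, he, hc, hd⟩ := hinv
  rw [hfree0] at hfree
  obtain ⟨e1, e2⟩ : f0 = f1 ∧ r0 = r1 := by
    have := Option.some_injective _ hfree
    exact ⟨congrArg Prod.fst this, congrArg Prod.snd this⟩
  subst e1; subst e2
  have hwbarr : (M.fpref f0 wbar : ℕ) = r0 := by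
    rw [← hwt, Equiv.apply_symm_apply]
  have hf0none : s.asg f0 = none := (ha f0).mpr rfl
  have hmff0 : μ'.mf f0 = some wbar := by
    rw [hmf']; exact Function.update_self _ _ _
  have hmwwbar : μ'.mw wbar = some f0 := (μ'.consistent f0 wbar).mp hmff0
  intro g w hblock
  obtain ⟨hne, hF, hW⟩ := hblock
  by_cases hgf : g = f0
  · subst hgf
    have hlt : M.fpref g w < M.fpref g wbar := hF wbar (by rw [hmff0]; rfl)
    have hcw : (M.fpref g w : ℕ) < r0 := by rw [← hwbarr]; exact hlt
    rcases hc w hcw with ⟨hwb, _⟩ | ⟨h, hh, hle⟩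
    · rw [hwb] at hlt; exact lt_irrefl _ hlt
    · have hhf : h ≠ g := by
        intro hc'; rw [hc', hf0none] at hh; exact nomatch hh
      have hmfh : μ'.mf h = some w := by
        rw [hmf', Function.update_of_ne hhf]; exact hh
      have hmww : μ'.mw w = some h := (μ'.consistent h w).mp hmfh
      have hWh := hW h (by rw [hmww]; rfl)
      exact absurd hWh (not_lt.mpr hle)
  · have hgne : s.asg g ≠ none := fun hc' => hgf ((ha g).mp hc')
    obtain ⟨w', hw'⟩ : ∃ w', s.asg g = some w' := by
      cases h' : s.asg g with
      | none => exact absurd h' hgne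
      | some w' => exact ⟨w', rfl⟩
    have hmfg : μ'.mf g = some w' := by
      rw [hmf', Function.update_of_ne hgf]; exact hw'
    have hlt : M.fpref g w < M.fpref g w' := hF w' (by rw [hmfg]; rfl)
    rcases hd g w w' hw' hlt with ⟨hwb, hle⟩ | ⟨h, hh, hle⟩
    · subst hwb
      have h1 := hW f0 (by rw [hmwwbar]; rfl)
      exact lt_irrefl _ (lt_trans (lt_of_le_of_lt hle h1) hpref)
    · have hhf : h ≠ f0 := by
        intro hc'; rw [hc', hf0none] at hh; exact nomatch hh
      have hmfh : μ'.mf h = some w := by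
        rw [hmf', Function.update_of_ne hhf]; exact hh
      have hmww : μ'.mw w = some h := (μ'.consistent h w).mp hmfh
      have hWh := hW h (by rw [hmww]; rfl)
      exact absurd hWh (not_lt.mpr hle)
end

section
/- In a matching market in which all pairs are mutually acceptable, let μ_F denote the firm-optimal stable matching. For every stable matching μ ≠ μ_F there exists a finite sequence of stable matchings μ_F = μ^0, μ^1, …, μ^m = μ such that for each j < m, μ^{j+1} is the resulting matching of a successfully terminating operation breakmarriage(μ^j, f_j) for some firm f_j matched under μ^j; moreover, along the sequence every firm's partner weakly worsens, so each breakmarriage output weakly worsens all firms. -/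
variable {n : ℕ}

/-- Firm `f` weakly prefers the (optional) partner `o` to the (optional) partner
`o'`; being matched is always weakly better than being unmatched. -/
def WeakFPrefOver (M : Market n) (f : Fin n) (o o' : Option (Fin n)) : Prop :=
  ∀ w' ∈ o', ∃ w ∈ o, M.fpref f w ≤ M.fpref f w'

/-- `μF` is the firm-optimal stable matching: it is stable and every firm weakly
prefers her partner under `μF` to her partner under any other stable matching. -/
def FirmOptimal (M : Market n) (μF : Matching n) : Prop :=
  Stable M μF ∧ ∀ μ : Matching n, Stable M μ → ∀ f, WeakFPrefOver M f (μF.mf f) (μ.mf f)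


/-! ### Auxiliary development -/

section Aux

lemma rank_strict (e : Fin n ≃ Fin n) {a b : Fin n} (h : (e a : ℕ) ≤ (e b : ℕ))
    (hne : a ≠ b) : (e a : ℕ) < (e b : ℕ) := by
  rcases lt_or_eq_of_le h with h' | h'
  · exact h'
  · exact absurd (e.injective (Fin.val_injective h')) hne

lemma eq_of_rank_eq (e : Fin n ≃ Fin n) {a b : Fin n} (h : (e a : ℕ) = (e b : ℕ)) :
    a = b := e.injective (Fin.val_injective h)

lemma perfect_f (M : Market n) (μ : Matching n) (h : Stable M μ) :
    ∀ g, ∃ w, μ.mf g = some w := by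
  intro g
  by_contra hg
  push_neg at hg
  have hgnone : μ.mf g = none := by
    cases hmf : μ.mf g with
    | none => rfl
    | some w => exact absurd hmf (hg w)
  by_cases hw : ∃ w, μ.mw w = none
  · obtain ⟨w, hw⟩ := hw
    refine h g w ⟨by simp [hgnone], ?_, ?_⟩
    · intro w' hw'; rw [hgnone] at hw'; cases hw'
    · intro f' hf'; rw [hw] at hf'; cases hf'
  · push_neg at hw
    have hall : ∀ w, ∃ g', μ.mw w = some g' := by
      intro w
      cases hmw : μ.mw w with
      | none => exact absurd hmw (hw w)
      | some g' => exact ⟨g', rfl⟩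
    choose e he using hall
    have einj : Function.Injective e := by
      intro w1 w2 hh
      have h1 : μ.mf (e w1) = some w1 := (μ.consistent _ _).mpr (he w1)
      have h2 : μ.mf (e w2) = some w2 := (μ.consistent _ _).mpr (he w2)
      rw [hh, h2] at h1
      exact (Option.some_injective _ h1).symm
    obtain ⟨w, hwg⟩ := (Finite.injective_iff_surjective.mp einj) g
    have : μ.mf g = some w := (μ.consistent _ _).mpr (hwg ▸ he w)
    exact hg w this

lemma perfect_w (M : Market n) (μ : Matching n) (h : Stable M μ) :
    ∀ w, ∃ g, μ.mw w = some g := by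
  intro w
  by_contra hw
  push_neg at hw
  have hwnone : μ.mw w = none := by
    cases hmw : μ.mw w with
    | none => rfl
    | some g => exact absurd hmw (hw g)
  have hall : ∀ g, ∃ w', μ.mf g = some w' := by
    intro g
    cases hmf : μ.mf g with
    | some w' => exact ⟨w', rfl⟩
    | none =>
      exfalso
      refine h g w ⟨by simp [hmf], ?_, ?_⟩
      · intro w' hw'; rw [hmf] at hw'; cases hw'
      · intro f' hf'; rw [hwnone] at hf'; cases hf'
  choose e he using hall
  have einj : Function.Injective e := by
    intro g1 g2 hh
    have h1 : μ.mw (e g1) = some g1 := (μ.consistent _ _).mp (he g1)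
    have h2 : μ.mw (e g2) = some g2 := (μ.consistent _ _).mp (he g2)
    rw [hh, h2] at h1
    exact (Option.some_injective _ h1).symm
  obtain ⟨g, hgw⟩ := (Finite.injective_iff_surjective.mp einj) w
  have : μ.mw w = some g := (μ.consistent _ _).mp (hgw ▸ he g)
  exact hw g this

lemma matching_eq {μ ν : Matching n} (h : ∀ g, ν.mf g = μ.mf g) : ν = μ := by
  have hmw : ∀ w, ν.mw w = μ.mw w := by
    intro w
    cases hν : ν.mw w with
    | none =>
      cases hμ' : μ.mw w with
      | none => rfl
      | some g =>
        have h1 := (μ.consistent g w).mpr hμ'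
        rw [← h g] at h1
        rw [(ν.consistent g w).mp h1] at hν
        cases hν
    | some g =>
      have h1 := (ν.consistent g w).mpr hν
      rw [h g] at h1
      exact ((μ.consistent g w).mp h1).symm
  cases μ; cases ν
  simp only [Matching.mk.injEq]
  exact ⟨funext h, funext hmw⟩

/-- The rejection record: worker `w` currently (weakly) rejects firm `g`. -/
def Rej (M : Market n) (f wbar : Fin n) (A : Fin n → Option (Fin n)) (w g : Fin n) : Prop :=
  (∃ h, A h = some w ∧ (M.wpref w h : ℕ) ≤ (M.wpref w g : ℕ)) ∨
  (w = wbar ∧ (M.wpref wbar f : ℕ) ≤ (M.wpref wbar g : ℕ))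

/-- The main invariant of the breakmarriage run. -/
structure InvC (M : Market n) (f wbar : Fin n) (νm νw μm : Fin n → Fin n)
    (f' : Fin n) (r : ℕ) (A : Fin n → Option (Fin n)) : Prop where
  i1 : A f' = none
  i2 : ∀ g, g ≠ f' → ∃ w, A g = some w
  i3 : ∀ g w, A g = some w → (M.fpref g (νm g) : ℕ) ≤ (M.fpref g w : ℕ)
  i4 : ∀ g w, A g = some w → (M.fpref g w : ℕ) ≤ (M.fpref g (μm g) : ℕ)
  i5 : ∀ g, A g ≠ some wbar
  i6 : ∀ g h w, A g = some w → A h = some w → g = h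
  i7 : ∀ w, w ≠ wbar → ∃ g, A g = some w
  i8 : ∀ g w, A g = some w → (M.wpref w g : ℕ) ≤ (M.wpref w (νw w) : ℕ)
  i9 : (M.fpref f' (νm f') : ℕ) < r
  i10 : r ≤ (M.fpref f' (μm f') : ℕ)
  i11 : ∀ g w, (M.fpref g (νm g) : ℕ) ≤ (M.fpref g w : ℕ) →
      ((g = f' ∧ (M.fpref g w : ℕ) < r) ∨
        (∃ w', A g = some w' ∧ (M.fpref g w : ℕ) < (M.fpref g w' : ℕ))) →
      Rej M f wbar A w g

/-- The progress measure. -/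
def Phi (M : Market n) (A : Fin n → Option (Fin n)) (r : ℕ) : ℕ :=
  r + ∑ g : Fin n, (A g).elim 0 (fun w => (M.fpref g w : ℕ))

/-- Context for the breakmarriage analysis. -/
structure Ctx (M : Market n) (μ ν : Matching n) (f wbar : Fin n)
    (νm νw μm μw : Fin n → Fin n) : Prop where
  hνm : ∀ g, ν.mf g = some (νm g)
  hνw : ∀ w, ν.mw w = some (νw w)
  hμm : ∀ g, μ.mf g = some (μm g)
  hμw : ∀ w, μ.mw w = some (μw w)
  hsν : Stable M ν
  hsμ : Stable M μ
  hwb : νm f = wbar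
  hstrict : (M.fpref f wbar : ℕ) < (M.fpref f (μm f) : ℕ)
  hle : ∀ g, (M.fpref g (νm g) : ℕ) ≤ (M.fpref g (μm g) : ℕ)

variable {M : Market n} {μ ν : Matching n} {f wbar : Fin n} {νm νw μm μw : Fin n → Fin n}

namespace Ctx

lemma νwνm (C : Ctx M μ ν f wbar νm νw μm μw) (g : Fin n) : νw (νm g) = g := by
  have h1 := (ν.consistent g (νm g)).mp (C.hνm g)
  rw [C.hνw] at h1
  exact Option.some_injective _ h1

lemma νmνw (C : Ctx M μ ν f wbar νm νw μm μw) (w : Fin n) : νm (νw w) = w := by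
  have h1 := (ν.consistent (νw w) w).mpr (C.hνw w)
  rw [C.hνm] at h1
  exact Option.some_injective _ h1

lemma μwμm (C : Ctx M μ ν f wbar νm νw μm μw) (g : Fin n) : μw (μm g) = g := by
  have h1 := (μ.consistent g (μm g)).mp (C.hμm g)
  rw [C.hμw] at h1
  exact Option.some_injective _ h1

lemma μmμw (C : Ctx M μ ν f wbar νm νw μm μw) (w : Fin n) : μm (μw w) = w := by
  have h1 := (μ.consistent (μw w) w).mpr (C.hμw w)
  rw [C.hμm] at h1
  exact Option.some_injective _ h1

lemma no_block_ν (C : Ctx M μ ν f wbar νm νw μm μw) {g w : Fin n}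
    (h1 : (M.fpref g w : ℕ) < (M.fpref g (νm g) : ℕ))
    (h2 : (M.wpref w g : ℕ) < (M.wpref w (νw w) : ℕ)) : False := by
  refine C.hsν g w ⟨?_, ?_, ?_⟩
  · rw [C.hνm g]
    intro hc
    have : νm g = w := Option.some_injective _ hc
    rw [this] at h1
    omega
  · intro w' hw'
    rw [C.hνm g] at hw'
    have : w' = νm g := by simpa using hw'.symm
    subst this
    exact Fin.lt_def.mpr h1
  · intro f0 hf0
    rw [C.hνw w] at hf0
    have : f0 = νw w := by simpa using hf0.symm
    subst this
    exact Fin.lt_def.mpr h2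

lemma no_block_μ (C : Ctx M μ ν f wbar νm νw μm μw) {g w : Fin n}
    (h1 : (M.fpref g w : ℕ) < (M.fpref g (μm g) : ℕ))
    (h2 : (M.wpref w g : ℕ) < (M.wpref w (μw w) : ℕ)) : False := by
  refine C.hsμ g w ⟨?_, ?_, ?_⟩
  · rw [C.hμm g]
    intro hc
    have : μm g = w := Option.some_injective _ hc
    rw [this] at h1
    omega
  · intro w' hw'
    rw [C.hμm g] at hw'
    have : w' = μm g := by simpa using hw'.symm
    subst this
    exact Fin.lt_def.mpr h1
  · intro f0 hf0
    rw [C.hμw w] at hf0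
    have : f0 = μw w := by simpa using hf0.symm
    subst this
    exact Fin.lt_def.mpr h2

lemma invc_init (C : Ctx M μ ν f wbar νm νw μm μw) :
    InvC M f wbar νm νw μm f ((M.fpref f wbar : ℕ) + 1)
      (fun g => if g = f then none else ν.mf g) := by
  set A : Fin n → Option (Fin n) := fun g => if g = f then none else ν.mf g with hA
  have hA0 : ∀ g w, A g = some w → g ≠ f ∧ w = νm g := by
    intro g w hg
    rw [hA] at hg
    simp only at hg
    by_cases hgf : g = f
    · rw [if_pos hgf] at hg; cases hg
    · rw [if_neg hgf, C.hνm g] at hg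
      exact ⟨hgf, (Option.some_injective _ hg).symm⟩
  have hνinj : ∀ g h : Fin n, νm g = νm h → g = h := by
    intro g h hgh
    have := congrArg νw hgh
    rwa [C.νwνm, C.νwνm] at this
  refine ⟨?_, ?_, ?_, ?_, ?_, ?_, ?_, ?_, ?_, ?_, ?_⟩
  · simp [hA]
  · intro g hg
    exact ⟨νm g, by simp [hA, if_neg hg, C.hνm g]⟩
  · intro g w hg
    rw [(hA0 g w hg).2]
  · intro g w hg
    rw [(hA0 g w hg).2]
    exact C.hle g
  · intro g hc
    obtain ⟨hgf, hwb'⟩ := hA0 g wbar hc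
    exact hgf (hνinj g f (by rw [← hwb', C.hwb]))
  · intro g h w hg hh
    exact hνinj g h (by rw [← (hA0 g w hg).2, ← (hA0 h w hh).2])
  · intro w hw
    refine ⟨νw w, ?_⟩
    have hne : νw w ≠ f := by
      intro hc
      exact hw (by rw [← C.νmνw w, hc, C.hwb])
    simp [hA, if_neg hne, C.hνm (νw w), C.νmνw w]
  · intro g w hg
    obtain ⟨-, hw⟩ := hA0 g w hg
    subst hw
    rw [C.νwνm]
  · rw [C.hwb]; omega
  · have := C.hstrict
    rw [← C.hwb] at this ⊢
    omega
  · intro g w h1 h2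
    rcases h2 with ⟨hgf, hlt⟩ | ⟨w', hw', hlt⟩
    · subst hgf
      rw [C.hwb] at h1
      have : (M.fpref g w : ℕ) = (M.fpref g wbar : ℕ) := by omega
      have hww : w = wbar := eq_of_rank_eq (M.fpref g) this
      exact Or.inr ⟨hww, le_refl _⟩
    · obtain ⟨-, hw''⟩ := hA0 g w' hw'
      subst hw''
      omega

lemma phi_bound {f' : Fin n} {r : ℕ} {A : Fin n → Option (Fin n)}
    (hI : InvC M f wbar νm νw μm f' r A) : Phi M A r < n + n * n := by
  have h1 : r < n := lt_of_le_of_lt hI.i10 (Fin.isLt _)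
  have h2 : ∑ g : Fin n, (A g).elim 0 (fun w => (M.fpref g w : ℕ)) ≤
      ∑ _g : Fin n, n := by
    refine Finset.sum_le_sum fun g _ => ?_
    cases hA : A g with
    | none => simp
    | some w =>
      simp only [Option.elim]
      exact le_of_lt (Fin.isLt _)
  simp only [Finset.sum_const, Finset.card_univ, Fintype.card_fin, smul_eq_mul] at h2
  unfold Phi
  omega

lemma step_or_success (C : Ctx M μ ν f wbar νm νw μm μw) {f' : Fin n} {r : ℕ}
    {A : Fin n → Option (Fin n)} (hI : InvC M f wbar νm νw μm f' r A) :
    (∃ hr : r < n, (M.fpref f').symm ⟨r, hr⟩ = wbar ∧ M.wpref wbar f' < M.wpref wbar f) ∨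
    (∃ B f'' r'', BMStep M f wbar ⟨A, some (f', r)⟩ ⟨B, some (f'', r'')⟩ ∧
      InvC M f wbar νm νw μm f'' r'' B ∧ Phi M B r'' = Phi M A r + 1) := by
  have hr : r < n := lt_of_le_of_lt hI.i10 (Fin.isLt _)
  set wt := (M.fpref f').symm ⟨r, hr⟩ with hwt
  have hrank : (M.fpref f' wt : ℕ) = r := by
    rw [hwt, Equiv.apply_symm_apply]
  by_cases hwtb : wt = wbar
  · by_cases hacc : M.wpref wbar f' < M.wpref wbar f
    · exact Or.inl ⟨hr, hwtb, hacc⟩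
    · right
      have haccn : (M.wpref wbar f : ℕ) ≤ (M.wpref wbar f' : ℕ) :=
        Fin.le_def.mp (not_lt.mp hacc)
      refine ⟨A, f', r + 1, ⟨f', r, hr, rfl, Or.inr (Or.inl ⟨hwtb, hI.i5, hacc, rfl⟩)⟩, ?_, ?_⟩
      · have hi10 : r + 1 ≤ (M.fpref f' (μm f') : ℕ) := by
          rcases lt_or_eq_of_le hI.i10 with h | h
          · omega
          · exfalso
            have hμwt : μm f' = wbar := by
              rw [← hwtb]
              exact eq_of_rank_eq (M.fpref f') (by omega)
            have hstr := C.hstrict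
            have hff' : f ≠ f' := by
              intro hc
              subst hc
              rw [hμwt] at hstr
              omega
            refine C.no_block_μ (g := f) (w := wbar) C.hstrict ?_
            have : μw wbar = f' := by rw [← hμwt, C.μwμm]
            rw [this]
            exact rank_strict (M.wpref wbar) haccn hff'
        refine ⟨hI.i1, hI.i2, hI.i3, hI.i4, hI.i5, hI.i6, hI.i7, hI.i8, by
          have := hI.i9; omega, hi10, ?_⟩
        intro g w h1 h2
        rcases h2 with ⟨hgf, hlt⟩ | h2
        · subst hgf
          rcases Nat.lt_succ_iff_lt_or_eq.mp hlt with hlt' | heq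
          · exact hI.i11 g w h1 (Or.inl ⟨rfl, hlt'⟩)
          · have hww : w = wbar := by
              rw [← hwtb]
              exact eq_of_rank_eq (M.fpref g) (by omega)
            exact Or.inr ⟨hww, haccn⟩
        · exact hI.i11 g w h1 (Or.inr h2)
      · unfold Phi; ring
  · obtain ⟨g, hg⟩ := hI.i7 wt hwtb
    have hgf' : g ≠ f' := by
      intro hc
      rw [hc, hI.i1] at hg
      cases hg
    by_cases hacc : M.wpref wt f' < M.wpref wt g
    · -- accept
      right
      refine ⟨fun x => if x = f' then some wt else if x = g then none else A x,
        g, (M.fpref g wt : ℕ) + 1,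
        ⟨f', r, hr, rfl, Or.inr (Or.inr ⟨g, hg, hacc, rfl⟩)⟩, ?_, ?_⟩
      · set A' : Fin n → Option (Fin n) :=
          fun x => if x = f' then some wt else if x = g then none else A x with hA'
        have haccn : (M.wpref wt f' : ℕ) < (M.wpref wt g : ℕ) := Fin.lt_def.mp hacc
        have hA'cases : ∀ x w, A' x = some w →
            (x = f' ∧ w = wt) ∨ (x ≠ f' ∧ x ≠ g ∧ A x = some w) := by
          intro x w hx
          rw [hA'] at hx
          simp only at hx
          by_cases h1 : x = f'
          · rw [if_pos h1] at hx
            exact Or.inl ⟨h1, (Option.some_injective _ hx).symm⟩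
          · rw [if_neg h1] at hx
            by_cases h2 : x = g
            · rw [if_pos h2] at hx; cases hx
            · rw [if_neg h2] at hx
              exact Or.inr ⟨h1, h2, hx⟩
        have hwtμg : wt ≠ μm g := by
          intro hc
          have hμwwt : μw wt = g := by rw [hc, C.μwμm]
          refine C.no_block_μ (g := f') (w := wt) ?_ ?_
          · rcases lt_or_eq_of_le hI.i10 with h | h
            · omega
            · exfalso
              have : wt = μm f' := eq_of_rank_eq (M.fpref f') (by omega)
              rw [this, C.μwμm] at hμwwt
              exact hgf' hμwwt.symm
          · rw [hμwwt]; exact haccn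
        have hi4g := hI.i4 g wt hg
        have hi3g := hI.i3 g wt hg
        have hrankg : (M.fpref g wt : ℕ) < (M.fpref g (μm g) : ℕ) :=
          rank_strict (M.fpref g) hi4g hwtμg
        refine ⟨?_, ?_, ?_, ?_, ?_, ?_, ?_, ?_, ?_, ?_, ?_⟩
        · rw [hA']; simp [if_neg hgf', hgf']
        · intro x hx
          by_cases h1 : x = f'
          · exact ⟨wt, by rw [hA', h1]; simp⟩
          · obtain ⟨w, hw⟩ := hI.i2 x h1
            exact ⟨w, by rw [hA']; simp only; rw [if_neg h1, if_neg hx]; exact hw⟩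
        · intro x w hx
          rcases hA'cases x w hx with ⟨h1, h2⟩ | ⟨-, -, h3⟩
          · subst h1; subst h2
            have := hI.i9; omega
          · exact hI.i3 x w h3
        · intro x w hx
          rcases hA'cases x w hx with ⟨h1, h2⟩ | ⟨-, -, h3⟩
          · subst h1; subst h2
            have := hI.i10; omega
          · exact hI.i4 x w h3
        · intro x hx
          rcases hA'cases x wbar hx with ⟨-, h2⟩ | ⟨-, -, h3⟩
          · exact hwtb h2.symm
          · exact hI.i5 x h3
        · intro x y w hx hy
          rcases hA'cases x w hx with ⟨h1, h2⟩ | ⟨h1, h1', h3⟩ <;>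
            rcases hA'cases y w hy with ⟨k1, k2⟩ | ⟨k1, k1', k3⟩
          · rw [h1, k1]
          · exfalso
            exact k1' (hI.i6 y g w k3 (by rw [← h2] at hg; exact hg))
          · exfalso
            exact h1' (hI.i6 x g w h3 (by rw [← k2] at hg; exact hg))
          · exact hI.i6 x y w h3 k3
        · intro w hw
          obtain ⟨x, hx⟩ := hI.i7 w hw
          by_cases h2 : x = g
          · subst h2
            rw [hx] at hg
            have hwwt : w = wt := Option.some_injective _ hg
            subst hwwt
            exact ⟨f', by rw [hA']; simp⟩
          · refine ⟨x, ?_⟩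
            have h1 : x ≠ f' := by
              intro hc; rw [hc, hI.i1] at hx; cases hx
            rw [hA']; simp only; rw [if_neg h1, if_neg h2]; exact hx
        · intro x w hx
          rcases hA'cases x w hx with ⟨h1, h2⟩ | ⟨-, -, h3⟩
          · subst h1; subst h2
            exact le_trans (le_of_lt haccn) (hI.i8 g wt hg)
          · exact hI.i8 x w h3
        · omega
        · omega
        · intro x w h1 h2
          have lift : Rej M f wbar A w x → Rej M f wbar A' w x := by
            intro hrej
            rcases hrej with ⟨h0, hh0, hle0⟩ | hrej
            · by_cases hh0g : h0 = g
              · subst hh0g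
                rw [hh0] at hg
                have hwwt : w = wt := Option.some_injective _ hg
                subst hwwt
                refine Or.inl ⟨f', ?_, by omega⟩
                rw [hA']; simp
              · have hh0f' : h0 ≠ f' := by
                  intro hc; rw [hc, hI.i1] at hh0; cases hh0
                refine Or.inl ⟨h0, ?_, hle0⟩
                rw [hA']
                simp only
                rw [if_neg hh0f', if_neg hh0g]
                exact hh0
            · exact Or.inr hrej
          rcases h2 with ⟨hxg, hlt⟩ | ⟨w', hw', hlt⟩
          · subst hxg
            rcases Nat.lt_succ_iff_lt_or_eq.mp hlt with hlt' | heq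
            · exact lift (hI.i11 x w h1 (Or.inr ⟨wt, hg, hlt'⟩))
            · have hwwt : w = wt := eq_of_rank_eq (M.fpref x) heq
              subst hwwt
              refine Or.inl ⟨f', ?_, by omega⟩
              rw [hA']; simp
          · rcases hA'cases x w' hw' with ⟨hx1, hx2⟩ | ⟨-, -, hx3⟩
            · subst hx1; subst hx2
              exact lift (hI.i11 x w h1 (Or.inl ⟨rfl, by omega⟩))
            · exact lift (hI.i11 x w h1 (Or.inr ⟨w', hx3, hlt⟩))
      · -- Phi computation
        set A' : Fin n → Option (Fin n) :=
          fun x => if x = f' then some wt else if x = g then none else A x with hA'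
        have e1 : ∀ (T : Fin n → Option (Fin n)),
            ∑ x : Fin n, (T x).elim 0 (fun w => (M.fpref x w : ℕ)) =
            (T f').elim 0 (fun w => (M.fpref f' w : ℕ)) +
            ((T g).elim 0 (fun w => (M.fpref g w : ℕ)) +
              ∑ x ∈ (Finset.univ.erase f').erase g,
                (T x).elim 0 (fun w => (M.fpref x w : ℕ))) := by
          intro T
          rw [← Finset.add_sum_erase _ _ (Finset.mem_univ f')]
          congr 1
          rw [← Finset.add_sum_erase _ _ (Finset.mem_erase.mpr ⟨hgf', Finset.mem_univ g⟩)]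
        have t1 : A' f' = some wt := by rw [hA']; simp
        have t2 : A' g = none := by rw [hA']; simp [hgf']
        have h2 : ∑ x ∈ (Finset.univ.erase f').erase g,
              (A' x).elim 0 (fun w => (M.fpref x w : ℕ)) =
            ∑ x ∈ (Finset.univ.erase f').erase g,
              (A x).elim 0 (fun w => (M.fpref x w : ℕ)) := by
          refine Finset.sum_congr rfl fun x hx => ?_
          have hx1 : x ≠ g := (Finset.mem_erase.mp hx).1
          have hx2 : x ≠ f' := (Finset.mem_erase.mp (Finset.mem_erase.mp hx).2).1
          rw [hA']
          simp only
          rw [if_neg hx2, if_neg hx1]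
        unfold Phi
        rw [e1 A', e1 A, h2, t1, t2, hI.i1, hg]
        simp only [Option.elim_none, Option.elim_some]
        omega
    · -- reject
      right
      have haccn : (M.wpref wt g : ℕ) ≤ (M.wpref wt f' : ℕ) :=
        Fin.le_def.mp (not_lt.mp hacc)
      refine ⟨A, f', r + 1, ⟨f', r, hr, rfl, Or.inl ⟨g, hg, hacc, rfl⟩⟩, ?_, ?_⟩
      · have hi10 : r + 1 ≤ (M.fpref f' (μm f') : ℕ) := by
          rcases lt_or_eq_of_le hI.i10 with h | h
          · omega
          · exfalso
            have hμwt : wt = μm f' := eq_of_rank_eq (M.fpref f') (by omega)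
            have hμwwt : μw wt = f' := by rw [hμwt, C.μwμm]
            have hwtμg : wt ≠ μm g := by
              intro hc
              rw [hc, C.μwμm] at hμwwt
              exact hgf' hμwwt
            refine C.no_block_μ (g := g) (w := wt)
              (rank_strict (M.fpref g) (hI.i4 g wt hg) hwtμg) ?_
            rw [hμwwt]
            exact rank_strict (M.wpref wt) haccn hgf'
        refine ⟨hI.i1, hI.i2, hI.i3, hI.i4, hI.i5, hI.i6, hI.i7, hI.i8, by
          have := hI.i9; omega, hi10, ?_⟩
        intro x w h1 h2
        rcases h2 with ⟨hxf, hlt⟩ | h2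
        · subst hxf
          rcases Nat.lt_succ_iff_lt_or_eq.mp hlt with hlt' | heq
          · exact hI.i11 x w h1 (Or.inl ⟨rfl, hlt'⟩)
          · have hwwt : w = wt := eq_of_rank_eq (M.fpref x) (by omega)
            subst hwwt
            exact Or.inl ⟨g, hg, haccn⟩
        · exact hI.i11 x w h1 (Or.inr h2)
      · unfold Phi; ring

lemma run (C : Ctx M μ ν f wbar νm νw μm μw) (k : ℕ) :
    ∀ {A : Fin n → Option (Fin n)} {f' : Fin n} {r : ℕ},
      InvC M f wbar νm νw μm f' r A → n + n * n ≤ Phi M A r + k →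
      ∃ B f'' r'', Relation.ReflTransGen (BMStep M f wbar) ⟨A, some (f', r)⟩ ⟨B, some (f'', r'')⟩ ∧
        InvC M f wbar νm νw μm f'' r'' B ∧
        ∃ hr : r'' < n, (M.fpref f'').symm ⟨r'', hr⟩ = wbar ∧
          M.wpref wbar f'' < M.wpref wbar f := by
  induction k with
  | zero =>
    intro A f' r hI hΦ
    exact absurd (phi_bound hI) (by omega)
  | succ k ih =>
    intro A f' r hI hΦ
    rcases step_or_success C hI with ⟨hr, h1, h2⟩ | ⟨B, f'', r'', hstep, hI', hphi⟩
    · exact ⟨A, f', r, Relation.ReflTransGen.refl, hI, hr, h1, h2⟩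
    · obtain ⟨B', f3, r3, hrt, hI3, hsucc⟩ := ih hI' (by omega)
      exact ⟨B', f3, r3, Relation.ReflTransGen.head hstep hrt, hI3, hsucc⟩

lemma breakmarriage_step (C : Ctx M μ ν f wbar νm νw μm μw) :
    ∃ ν' : Matching n, Breakmarriage M ν f ν' ∧ Stable M ν' ∧
      (∀ g, ∃ w, ν'.mf g = some w ∧ (M.fpref g (νm g) : ℕ) ≤ (M.fpref g w : ℕ) ∧
        (M.fpref g w : ℕ) ≤ (M.fpref g (μm g) : ℕ)) ∧
      (∀ w, ν'.mf f = some w → (M.fpref f (νm f) : ℕ) < (M.fpref f w : ℕ)) := by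
  classical
  obtain ⟨B, f'', r'', hrt, hI, hr, hsymm, hpref⟩ :=
    run C (n + n * n) (invc_init C) (by omega)
  set mf' : Fin n → Option (Fin n) := Function.update B f'' (some wbar) with hmf'
  have hmf'cases : ∀ x w, mf' x = some w → (x = f'' ∧ w = wbar) ∨ (x ≠ f'' ∧ B x = some w) := by
    intro x w hx
    by_cases h1 : x = f''
    · subst h1
      rw [hmf', Function.update_self] at hx
      exact Or.inl ⟨rfl, (Option.some_injective _ hx).symm⟩
    · rw [hmf', Function.update_of_ne h1] at hx
      exact Or.inr ⟨h1, hx⟩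
  have hmf'f'' : mf' f'' = some wbar := by rw [hmf', Function.update_self]
  have injmf : ∀ a b w, mf' a = some w → mf' b = some w → a = b := by
    intro a b w ha hb
    rcases hmf'cases a w ha with ⟨ha1, ha2⟩ | ⟨ha1, ha2⟩ <;>
      rcases hmf'cases b w hb with ⟨hb1, hb2⟩ | ⟨hb1, hb2⟩
    · rw [ha1, hb1]
    · exact absurd (ha2 ▸ hb2) (hI.i5 b)
    · exact absurd (hb2 ▸ ha2) (hI.i5 a)
    · exact hI.i6 a b w ha2 hb2
  have hex_dec : ∀ w : Fin n, Decidable (∃ g, mf' g = some w) := fun w => inferInstance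
  have hcons : ∀ g w, mf' g = some w ↔
      (fun w => if h : ∃ g, mf' g = some w then some h.choose else none) w = some g := by
    intro g w
    constructor
    · intro h
      have hex : ∃ g', mf' g' = some w := ⟨g, h⟩
      show (if h : ∃ g', mf' g' = some w then some h.choose else none) = some g
      rw [dif_pos hex]
      exact congrArg some (injmf _ _ _ hex.choose_spec h)
    · intro h
      replace h : (if h : ∃ g', mf' g' = some w then some h.choose else none) = some g := h
      by_cases hex : ∃ g', mf' g' = some w
      · rw [dif_pos hex] at h
        have := hex.choose_spec
        rwa [Option.some_inj.mp h] at this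
      · rw [dif_neg hex] at h
        cases h
  set ν' : Matching n :=
    ⟨mf', fun w => if h : ∃ g, mf' g = some w then some h.choose else none, hcons⟩ with hν'
  have hν'mf : ν'.mf = mf' := rfl
  -- partner bounds
  have hpart : ∀ g, ∃ w, ν'.mf g = some w ∧ (M.fpref g (νm g) : ℕ) ≤ (M.fpref g w : ℕ) ∧
      (M.fpref g w : ℕ) ≤ (M.fpref g (μm g) : ℕ) := by
    intro g
    by_cases hgf'' : g = f''
    · subst hgf''
      refine ⟨wbar, hmf'f'', ?_, ?_⟩
      · have : (M.fpref g wbar : ℕ) = r'' := by rw [← hsymm, Equiv.apply_symm_apply]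
        have := hI.i9
        omega
      · have : (M.fpref g wbar : ℕ) = r'' := by rw [← hsymm, Equiv.apply_symm_apply]
        have := hI.i10
        omega
    · obtain ⟨w, hw⟩ := hI.i2 g hgf''
      refine ⟨w, ?_, hI.i3 g w hw, hI.i4 g w hw⟩
      rw [hν'mf, hmf', Function.update_of_ne hgf'']
      exact hw
  -- the holder of w under ν'
  have hholder : ∀ w, ∃ h, ν'.mf h = some w := by
    intro w
    by_cases hwb' : w = wbar
    · exact ⟨f'', by rw [hwb']; exact hmf'f''⟩
    · obtain ⟨h, hh⟩ := hI.i7 w hwb'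
      have hhf'' : h ≠ f'' := by
        intro hc; rw [hc, hI.i1] at hh; cases hh
      exact ⟨h, by rw [hν'mf, hmf', Function.update_of_ne hhf'']; exact hh⟩
  have hwbar_holder : ∀ h, ν'.mf h = some wbar → h = f'' := by
    intro h hh
    exact injmf h f'' wbar hh hmf'f''
  have hν'f : f ≠ f'' := by
    intro hc
    rw [hc] at hpref
    exact lt_irrefl _ hpref
  refine ⟨ν', ?_, ?_, hpart, ?_⟩
  · refine ⟨wbar, by rw [C.hνm f, C.hwb], ⟨B, some (f'', r'')⟩, hrt, ?_⟩
    exact ⟨f'', r'', hr, rfl, hsymm, hI.i5, hpref, rfl⟩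
  · -- stability
    intro g w hblock
    obtain ⟨hne', hfp, hwp⟩ := hblock
    obtain ⟨wg, hwg, h3g, h4g⟩ := hpart g
    have hlt : (M.fpref g w : ℕ) < (M.fpref g wg : ℕ) := by
      refine Fin.lt_def.mp (hfp wg ?_)
      rw [hwg]; rfl
    obtain ⟨h, hh⟩ := hholder w
    have hmw : ν'.mw w = some h := (ν'.consistent h w).mp hh
    have hwlt : (M.wpref w g : ℕ) < (M.wpref w h : ℕ) := by
      refine Fin.lt_def.mp (hwp h ?_)
      rw [hmw]; rfl
    have hwh_le : (M.wpref w h : ℕ) ≤ (M.wpref w (νw w) : ℕ) := by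
      by_cases hwb' : w = wbar
      · have hhf : h = f'' := hwbar_holder h (by rw [← hwb']; exact hh)
        have hνwwbar : νw wbar = f := by rw [← C.hwb, C.νwνm]
        rw [hwb', hνwwbar, hhf]
        exact le_of_lt (Fin.lt_def.mp hpref)
      · have hhf'' : h ≠ f'' := by
          intro hc
          rw [hν'mf, hc, hmf'f''] at hh
          exact hwb' (Option.some_injective _ hh).symm
        rw [hν'mf, hmf', Function.update_of_ne hhf''] at hh
        exact hI.i8 h w hh
    rcases lt_trichotomy (M.fpref g w : ℕ) (M.fpref g (νm g) : ℕ) with htri | htri | htri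
    · exact C.no_block_ν htri (by omega)
    · have hwνm : w = νm g := eq_of_rank_eq (M.fpref g) htri
      have : νw w = g := by rw [hwνm, C.νwνm]
      rw [this] at hwh_le
      omega
    · have hrej : Rej M f wbar B w g := by
        refine hI.i11 g w (le_of_lt htri) ?_
        by_cases hgf'' : g = f''
        · subst hgf''
          have hwgwbar : wg = wbar := by
            rw [hν'mf, hmf'f''] at hwg
            exact (Option.some_injective _ hwg).symm
          subst hwgwbar
          have hrwg : (M.fpref g wg : ℕ) = r'' := by rw [← hsymm, Equiv.apply_symm_apply]
          exact Or.inl ⟨rfl, by omega⟩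
        · rw [hν'mf, hmf', Function.update_of_ne hgf''] at hwg
          exact Or.inr ⟨wg, hwg, hlt⟩
      rcases hrej with ⟨h0, hh0, hle0⟩ | ⟨hwb', hle0⟩
      · have hh0f'' : h0 ≠ f'' := by
          intro hc; rw [hc, hI.i1] at hh0; cases hh0
        have hh0' : ν'.mf h0 = some w := by
          rw [hν'mf, hmf', Function.update_of_ne hh0f'']; exact hh0
        have : h0 = h := injmf h0 h w hh0' hh
        rw [this] at hle0
        omega
      · have hh' : ν'.mf h = some wbar := by rw [← hwb']; exact hh
        have hhf : h = f'' := hwbar_holder h hh'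
        rw [hwb', hhf] at hwlt
        have := Fin.lt_def.mp hpref
        omega
  · -- strictness for f
    intro w hw
    have hBf : B f = some w := by
      rw [hν'mf, hmf', Function.update_of_ne hν'f] at hw
      exact hw
    have h3 := hI.i3 f w hBf
    have hwne : νm f ≠ w := by
      intro hc
      rw [← hc, C.hwb] at hBf
      exact hI.i5 f hBf
    exact rank_strict (M.fpref f) h3 hwne

end Ctx

/-- The rank of the partner of firm `g` (0 if unmatched). -/
def prank (M : Market n) (ξ : Matching n) (g : Fin n) : ℕ :=
  (ξ.mf g).elim 0 (fun w => (M.fpref g w : ℕ))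

lemma main_aux (hsμ : Stable M μ) (hμm : ∀ g, μ.mf g = some (μm g))
    (hμw : ∀ w, μ.mw w = some (μw w)) :
    ∀ k (ν : Matching n), Stable M ν → (∀ g, WeakFPrefOver M g (ν.mf g) (μ.mf g)) →
      (∑ g : Fin n, ((M.fpref g (μm g) : ℕ) - prank M ν g)) ≤ k →
      ∃ (m : ℕ) (seq : ℕ → Matching n), seq 0 = ν ∧ seq m = μ ∧
        (∀ j ≤ m, Stable M (seq j)) ∧
        (∀ j < m, ∃ fj : Fin n, Breakmarriage M (seq j) fj (seq (j + 1))) ∧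
        (∀ j < m, ∀ g : Fin n, WeakFPrefOver M g ((seq j).mf g) ((seq (j + 1)).mf g)) := by
  intro k
  induction k with
  | zero =>
    intro ν hsν hwk hk
    by_cases hc : ν = μ
    · exact ⟨0, fun _ => ν, rfl, by rw [hc], fun j _ => hsν, fun j hj => absurd hj (by omega),
        fun j hj => absurd hj (by omega)⟩
    · exfalso
      choose νm hνm using perfect_f M ν hsν
      have hle : ∀ g, (M.fpref g (νm g) : ℕ) ≤ (M.fpref g (μm g) : ℕ) := by
        intro g
        obtain ⟨w, hw, hle'⟩ := hwk g (μm g) (by rw [hμm g]; rfl)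
        rw [hνm g] at hw
        have hww : w = νm g := Option.some_injective _ hw.symm
        rw [← hww]
        exact Fin.le_def.mp hle'
      have hex : ∃ f0, νm f0 ≠ μm f0 := by
        by_contra hall
        push_neg at hall
        exact hc (matching_eq fun g => by rw [hνm g, hμm g, hall g])
      obtain ⟨f0, hf0⟩ := hex
      have hstrict : (M.fpref f0 (νm f0) : ℕ) < (M.fpref f0 (μm f0) : ℕ) :=
        rank_strict (M.fpref f0) (hle f0) hf0
      have hprν : prank M ν f0 = (M.fpref f0 (νm f0) : ℕ) := by
        unfold prank; rw [hνm f0]; rfl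
      have hsingle : ((M.fpref f0 (μm f0) : ℕ) - prank M ν f0) ≤
          ∑ g : Fin n, ((M.fpref g (μm g) : ℕ) - prank M ν g) :=
        Finset.single_le_sum (f := fun g => (M.fpref g (μm g) : ℕ) - prank M ν g)
          (fun i _ => Nat.zero_le _) (Finset.mem_univ f0)
      omega
  | succ k ih =>
    intro ν hsν hwk hk
    by_cases hc : ν = μ
    · exact ⟨0, fun _ => ν, rfl, by rw [hc], fun j _ => hsν, fun j hj => absurd hj (by omega),
        fun j hj => absurd hj (by omega)⟩
    · choose νm hνm using perfect_f M ν hsν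
      choose νw hνw using perfect_w M ν hsν
      have hle : ∀ g, (M.fpref g (νm g) : ℕ) ≤ (M.fpref g (μm g) : ℕ) := by
        intro g
        obtain ⟨w, hw, hle'⟩ := hwk g (μm g) (by rw [hμm g]; rfl)
        rw [hνm g] at hw
        have hww : w = νm g := Option.some_injective _ hw.symm
        rw [← hww]
        exact Fin.le_def.mp hle'
      have hex : ∃ f0, νm f0 ≠ μm f0 := by
        by_contra hall
        push_neg at hall
        exact hc (matching_eq fun g => by rw [hνm g, hμm g, hall g])
      obtain ⟨f0, hf0⟩ := hex
      have hstrict : (M.fpref f0 (νm f0) : ℕ) < (M.fpref f0 (μm f0) : ℕ) :=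
        rank_strict (M.fpref f0) (hle f0) hf0
      have C : Ctx M μ ν f0 (νm f0) νm νw μm μw :=
        ⟨hνm, hνw, hμm, hμw, hsν, hsμ, rfl, hstrict, hle⟩
      obtain ⟨ν', hbm, hsν', hpart, hstrictf⟩ := Ctx.breakmarriage_step C
      have hprν : ∀ g, prank M ν g = (M.fpref g (νm g) : ℕ) := by
        intro g; unfold prank; rw [hνm g]; rfl
      have hprν' : ∀ g, ∃ w, ν'.mf g = some w ∧ prank M ν' g = (M.fpref g w : ℕ) ∧
          (M.fpref g (νm g) : ℕ) ≤ (M.fpref g w : ℕ) ∧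
          (M.fpref g w : ℕ) ≤ (M.fpref g (μm g) : ℕ) := by
        intro g
        obtain ⟨w, hw, h3, h4⟩ := hpart g
        exact ⟨w, hw, by unfold prank; rw [hw]; rfl, h3, h4⟩
      have hd : (∑ g : Fin n, ((M.fpref g (μm g) : ℕ) - prank M ν' g)) <
          ∑ g : Fin n, ((M.fpref g (μm g) : ℕ) - prank M ν g) := by
        refine Finset.sum_lt_sum (fun g _ => ?_) ⟨f0, Finset.mem_univ f0, ?_⟩
        · obtain ⟨w, hw, hpr, h3, h4⟩ := hprν' g
          rw [hpr, hprν g]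
          omega
        · obtain ⟨w, hw, hpr, h3, h4⟩ := hprν' f0
          have h5 := hstrictf w hw
          rw [hpr, hprν f0]
          omega
      have hwk' : ∀ g, WeakFPrefOver M g (ν'.mf g) (μ.mf g) := by
        intro g w' hw'
        rw [hμm g] at hw'
        have hww : w' = μm g := Option.some_injective _ hw'.symm
        obtain ⟨w, hw, hpr, h3, h4⟩ := hprν' g
        refine ⟨w, by rw [hw]; rfl, ?_⟩
        rw [hww]
        exact Fin.le_def.mpr h4
      obtain ⟨m, seq', h0', hm', hst', hbm', hwkk⟩ := ih ν' hsν' hwk' (by omega)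
      refine ⟨m + 1, fun j => Nat.casesOn j ν (fun i => seq' i), rfl, hm', ?_, ?_, ?_⟩
      · intro j hj
        cases j with
        | zero => exact hsν
        | succ i => exact hst' i (by omega)
      · intro j hj
        cases j with
        | zero =>
          refine ⟨f0, ?_⟩
          show Breakmarriage M ν f0 (seq' 0)
          rw [h0']
          exact hbm
        | succ i => exact hbm' i (by omega)
      · intro j hj g
        cases j with
        | zero =>
          show WeakFPrefOver M g (ν.mf g) ((seq' 0).mf g)
          rw [h0']
          intro w' hw'
          obtain ⟨w, hw, hpr, h3, h4⟩ := hprν' g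
          rw [hw] at hw'
          have hww : w' = w := Option.some_injective _ hw'.symm
          refine ⟨νm g, by rw [hνm g]; rfl, ?_⟩
          rw [hww]
          exact Fin.le_def.mpr h3
        | succ i => exact hwkk i (by omega) g

end Aux

/-- **Theorem (McVitie–Wilson)**: every stable matching `μ ≠ μF` is obtained from
the firm-optimal stable matching `μF` by finitely many successive successfully
terminating `breakmarriage` operations; moreover along the sequence every firm's
partner weakly worsens. -/
theorem stmt12 (M : Market n) (μF : Matching n) (hF : FirmOptimal M μF)
    (μ : Matching n) (hμ : Stable M μ) (hne : μ ≠ μF) :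
    ∃ (m : ℕ) (seq : ℕ → Matching n), seq 0 = μF ∧ seq m = μ ∧
      (∀ j ≤ m, Stable M (seq j)) ∧
      (∀ j < m, ∃ fj : Fin n, Breakmarriage M (seq j) fj (seq (j + 1))) ∧
      (∀ j < m, ∀ f : Fin n, WeakFPrefOver M f ((seq j).mf f) ((seq (j + 1)).mf f)) := by
  classical
  choose μm hμm using perfect_f M μ hμ
  choose μw hμw using perfect_w M μ hμ
  exact main_aux hμ hμm hμw _ μF hF.1 (hF.2 μ hμ) le_rfl
end
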